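/- arXiv:1206.3879 — 2 statements merged into one kernel-verified Lean document; each statement's English description precedes it below -/
import Mathlib

section
/- Let (n11, n12; n21, n22) be a 2×2 complex matrix with determinant n11·n22 − n12·n21 = 1, let ν(u) = (n11·u + n12)/(n21·u + n22) be the associated Möbius transformation and j(u) = n21·u + n22 the automorphy factor. For t, s ∈ ℂ with t ≠ s, j(t) ≠ 0, j(s) ≠ 0, define for each z ∈ ℂ the 2×2 matrices X_{t,s}(z) = [[1, −z/(t − s)], [0, 1]] and X_{ν,t}(z) = [[1, −n21·z/j(t)], [0, 1]]. Then for every z ∈ ℂ, X_{ν(t),ν(s)}(z) = X_{t,s}(j(t)²·z) · (X_{ν,t}(j(t)²·z))⁻¹ as 2×2 complex matrices. -/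
open Matrix

/-! Both sides are upper unitriangular, and such matrices multiply by adding their corner
entries, so the identity reduces to one scalar equation. It follows from the cocycle formula
`ν t - ν s = (t - s) / (j t * j s)` for a Möbius map of determinant one, together with
`j s = j t - n21 * (t - s)`. -/

section Unitriangular

variable {R : Type*} [CommRing R]

theorem unitriangular_mul_unitriangular (a b : R) :
    (!![1, a; 0, 1] : Matrix (Fin 2) (Fin 2) R) * !![1, b; 0, 1] = !![1, a + b; 0, 1] := by
  simp [add_comm]

theorem unitriangular_inv (b : R) :
    (!![1, b; 0, 1] : Matrix (Fin 2) (Fin 2) R)⁻¹ = !![1, -b; 0, 1] :=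
  inv_eq_right_inv <| by rw [unitriangular_mul_unitriangular, add_neg_cancel, one_fin_two]

end Unitriangular

theorem mobius_sub_mobius {K : Type*} [Field K] {a b c d t s : K}
    (ht : c * t + d ≠ 0) (hs : c * s + d ≠ 0) :
    (a * t + b) / (c * t + d) - (a * s + b) / (c * s + d) =
      (a * d - b * c) * (t - s) / ((c * t + d) * (c * s + d)) := by
  rw [div_sub_div _ _ ht hs]
  congr 1
  ring

/-- Compatibility (equation (4.7)) between the anti-holomorphic completion operator
`X_{t,s}(z) = [[1, −z/(t − s)], [0, 1]]` and the analytic continuation operator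
`X_{ν,t}(z) = [[1, −n21·z/j(t)], [0, 1]]` under the monodromy Möbius transformation
`ν(u) = (n11·u + n12)/(n21·u + n22)` with automorphy factor `j(u) = n21·u + n22`. -/
theorem antiholomorphic_completion_matrix_identity
    (n11 n12 n21 n22 : ℂ) (hdet : n11 * n22 - n12 * n21 = 1)
    (ν : ℂ → ℂ) (hν : ∀ u, ν u = (n11 * u + n12) / (n21 * u + n22))
    (j : ℂ → ℂ) (hj : ∀ u, j u = n21 * u + n22)
    (t s : ℂ) (hts : t ≠ s) (hjt : j t ≠ 0) (hjs : j s ≠ 0)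
    (X : ℂ → ℂ → ℂ → Matrix (Fin 2) (Fin 2) ℂ)
    (hX : ∀ a b z, X a b z = !![1, -z / (a - b); 0, 1])
    (Xν : ℂ → ℂ → Matrix (Fin 2) (Fin 2) ℂ)
    (hXν : ∀ a z, Xν a z = !![1, -n21 * z / j a; 0, 1]) :
    ∀ z : ℂ, X (ν t) (ν s) z = X t s ((j t) ^ 2 * z) * (Xν t ((j t) ^ 2 * z))⁻¹ := by
  intro z
  have hν_sub : ν t - ν s = (t - s) / (j t * j s) := by
    rw [hν, hν, mobius_sub_mobius (hj t ▸ hjt) (hj s ▸ hjs), hdet, one_mul, hj, hj]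
  have hjs_eq : j s = j t - n21 * (t - s) := by rw [hj, hj]; ring
  have hts' : t - s ≠ 0 := sub_ne_zero.mpr hts
  have hcorner :
      -z / (ν t - ν s) = -(j t ^ 2 * z) / (t - s) + -(-n21 * (j t ^ 2 * z) / j t) := by
    rw [hν_sub, hjs_eq]
    field_simp
    ring
  rw [hX, hX, hXν, unitriangular_inv, unitriangular_mul_unitriangular, hcorner]
end

section
/- Let V be a nonempty finite set, and let g_v, r_v, n_v be natural numbers assigned to each v ∈ V satisfying the stability condition 2g_v + r_v + n_v ≥ 3 for every v. Let E, g, n be natural numbers such that ∑_{v ∈ V} r_v = 2E, ∑_{v ∈ V} n_v = n, and ∑_{v ∈ V} g_v + E + 1 = g + |V| (the genus formula for a connected graph with E edges and |V| vertices). Then E + 3 ≤ 3g + n. -/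
open Finset

/-- Combinatorial core of Lemma 4.1: for a connected decorated graph of genus `g`
with `n` tails, `E` edges, and vertex data `(g_v, r_v, n_v)` satisfying the
stability condition `2g_v + r_v + n_v ≥ 3`, with `∑ r_v = 2E`, `∑ n_v = n`, and
the genus formula `∑ g_v + E + 1 = g + |V|`, the number of edges satisfies
`E + 3 ≤ 3g + n`. -/
theorem graph_edge_bound
    (V : Type*) [Fintype V] [Nonempty V]
    (gv rv nv : V → ℕ)
    (hstab : ∀ v : V, 3 ≤ 2 * gv v + rv v + nv v)
    (E g n : ℕ)
    (hr : ∑ v : V, rv v = 2 * E)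
    (hn : ∑ v : V, nv v = n)
    (hgenus : (∑ v : V, gv v) + E + 1 = g + Fintype.card V) :
    E + 3 ≤ 3 * g + n := by
  have key : 3 * Fintype.card V ≤ 2 * (∑ v : V, gv v) + (∑ v : V, rv v) + (∑ v : V, nv v) := by
    calc 3 * Fintype.card V = ∑ _v : V, 3 := by simp [mul_comm]
    _ ≤ ∑ v : V, (2 * gv v + rv v + nv v) := Finset.sum_le_sum fun v _ => hstab v
    _ = 2 * (∑ v : V, gv v) + (∑ v : V, rv v) + (∑ v : V, nv v) := by
        simp [Finset.sum_add_distrib, Finset.mul_sum]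
  omega
end
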